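/- arXiv:1802.07970 — 6 statements merged into one kernel-verified Lean document; each statement's English description precedes it below -/
import Mathlib

section
/- On any almost Hermitian manifold of dimension 2n with n > 1, the component of the exterior derivative dθ of the Lee form θ that is proportional to the Kähler form ω vanishes; equivalently, ⟨dθ, ω⟩ = 0 pointwise. -/
/-!
Since `ω(X, Y) = g(X, JY)` and `J` is skew, `⟨dθ, ω⟩` is `-Σⱼ (∇_{eⱼ} θ)(J eⱼ)` up to a factor.
For `θ = c · δ ∘ J` with `δ = d*ω` one computes `(∇_X θ)(J X) = -c ((∇_X δ)(X) + δ(J (∇_X J) X))`.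
The trace of the first term is `c · d*d*ω`, which vanishes for every 2-form: by the Ricci identity
it reduces to contracting the (symmetric) Ricci tensor against the 2-form. The trace of the
second term vanishes because `Σⱼ J (∇_{eⱼ} J) eⱼ` is the metric dual of `-δ ∘ J`, so that `δ`
takes the value `-Σᵢ δ(J eᵢ) δ(eᵢ)` on it, which is zero as `J` is skew.
-/

open Finset

theorem eq_zero_of_eq_neg {M : Type*} [AddCommGroup M] [Module ℝ M] {x : M} (h : x = -x) :
    x = 0 := by
  have h2 : (2 : ℝ) • x = 0 := by
    rw [two_smul]
    nth_rewrite 2 [h]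
    exact add_neg_cancel x
  exact (smul_eq_zero.mp h2).resolve_left two_ne_zero

theorem sum_sum_eq_zero_of_antisymm {ι M : Type*} [Fintype ι] [AddCommGroup M] [Module ℝ M]
    {f : ι → ι → M} (h : ∀ i j, f i j = -f j i) : ∑ i, ∑ j, f i j = 0 := by
  refine eq_zero_of_eq_neg ?_
  calc ∑ i, ∑ j, f i j = ∑ i, ∑ j, -f j i := sum_congr rfl fun i _ => sum_congr rfl fun j _ => h i j
    _ = -∑ i, ∑ j, f i j := by rw [sum_comm]; simp only [sum_neg_distrib]

/-- `C` plays the role of the smooth functions and `V` of the vector fields; `act X f` is the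
derivative of `f` along `X`, `bk` the Lie bracket and `lc` the connection. -/
structure LeviCivitaConnection (C V : Type*) [CommRing C] [Algebra ℝ C] [AddCommGroup V]
    [Module C V] where
  bk : V → V → V
  act : V → C → C
  g : V → V → C
  lc : V → V → V
  g_comm : ∀ X Y, g X Y = g Y X
  g_add_left : ∀ X Y Z, g (X + Y) Z = g X Z + g Y Z
  g_smul_left : ∀ (f : C) X Y, g (f • X) Y = f * g X Y
  act_add : ∀ X (f h : C), act X (f + h) = act X f + act X h
  act_mul : ∀ X (f h : C), act X (f * h) = f * act X h + act X f * h
  add_act : ∀ X Y f, act (X + Y) f = act X f + act Y f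
  smul_act : ∀ (f : C) X h, act (f • X) h = f * act X h
  act_algebraMap : ∀ X (r : ℝ), act X (algebraMap ℝ C r) = 0
  bk_eq : ∀ X Y, bk X Y = lc X Y - lc Y X
  jacobi : ∀ X Y Z, bk (bk X Y) Z + bk (bk Y Z) X + bk (bk Z X) Y = 0
  act_bk : ∀ X Y f, act (bk X Y) f = act X (act Y f) - act Y (act X f)
  add_lc : ∀ X Y Z, lc (X + Y) Z = lc X Z + lc Y Z
  lc_add : ∀ X Y Z, lc X (Y + Z) = lc X Y + lc X Z
  smul_lc : ∀ (f : C) X Y, lc (f • X) Y = f • lc X Y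
  lc_smul : ∀ (f : C) X Y, lc X (f • Y) = act X f • Y + f • lc X Y
  act_g : ∀ X Y Z, act X (g Y Z) = g (lc X Y) Z + g Y (lc X Z)

namespace LeviCivitaConnection

variable {C V : Type*} [CommRing C] [Algebra ℝ C] [AddCommGroup V] [Module C V]
variable (S : LeviCivitaConnection C V)

def actHom (X : V) : C →+ C := AddMonoidHom.mk' (S.act X) (S.act_add X)

def actLeft (f : C) : V →+ C := AddMonoidHom.mk' (S.act · f) (fun X Y => S.add_act X Y f)

def gForm : LinearMap.BilinForm C V :=
  LinearMap.mk₂ C S.g S.g_add_left S.g_smul_left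
    (fun X Y Z => by rw [S.g_comm, S.g_add_left, S.g_comm Y, S.g_comm Z])
    (fun f X Y => by rw [S.g_comm, S.g_smul_left, S.g_comm, smul_eq_mul])

def lcLeft (Y : V) : V →ₗ[C] V where
  toFun X := S.lc X Y
  map_add' X X' := S.add_lc X X' Y
  map_smul' f X := S.smul_lc f X Y

lemma act_zero (X : V) : S.act X 0 = 0 := map_zero (S.actHom X)

lemma act_neg (X : V) (f : C) : S.act X (-f) = -S.act X f := map_neg (S.actHom X) f

lemma act_sub (X : V) (f h : C) : S.act X (f - h) = S.act X f - S.act X h :=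
  map_sub (S.actHom X) f h

lemma act_sum {ι : Type*} (X : V) (s : Finset ι) (f : ι → C) :
    S.act X (∑ i ∈ s, f i) = ∑ i ∈ s, S.act X (f i) :=
  map_sum (S.actHom X) f s

lemma sub_act (X Y : V) (f : C) : S.act (X - Y) f = S.act X f - S.act Y f :=
  map_sub (S.actLeft f) X Y

lemma act_one (X : V) : S.act X 1 = 0 := by
  simpa using S.act_algebraMap X 1

lemma act_algebraMap_mul (X : V) (r : ℝ) (f : C) :
    S.act X (algebraMap ℝ C r * f) = algebraMap ℝ C r * S.act X f := by
  rw [S.act_mul, S.act_algebraMap, zero_mul, add_zero]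

lemma g_sub_left (X Y Z : V) : S.g (X - Y) Z = S.g X Z - S.g Y Z := S.gForm.map_sub₂ X Y Z

lemma g_neg_left (X Y : V) : S.g (-X) Y = -S.g X Y := S.gForm.map_neg₂ X Y

lemma g_zero_left (X : V) : S.g 0 X = 0 := S.gForm.map_zero₂ X

lemma g_neg_right (X Y : V) : S.g X (-Y) = -S.g X Y := map_neg (S.gForm X) Y

lemma sub_lc (X Y Z : V) : S.lc (X - Y) Z = S.lc X Z - S.lc Y Z := map_sub (S.lcLeft Z) X Y

lemma lc_neg (X Y : V) : S.lc X (-Y) = -S.lc X Y := by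
  have h := S.lc_add X Y (-Y)
  rw [add_neg_cancel, ← zero_smul C (0 : V), S.lc_smul, S.act_zero] at h
  simp only [zero_smul, add_zero] at h
  exact eq_neg_of_add_eq_zero_right h.symm

lemma lc_sub (X Y Z : V) : S.lc X (Y - Z) = S.lc X Y - S.lc X Z := by
  rw [sub_eq_add_neg, S.lc_add, S.lc_neg, sub_eq_add_neg]

lemma act_comm (X Y : V) (f : C) :
    S.act X (S.act Y f) - S.act Y (S.act X f) = S.act (S.lc X Y) f - S.act (S.lc Y X) f := by
  rw [← S.act_bk, S.bk_eq, S.sub_act]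

def curvature (X Y Z : V) : V := S.lc X (S.lc Y Z) - S.lc Y (S.lc X Z) - S.lc (S.bk X Y) Z

def curvatureForm (X Y Z W : V) : C := S.g (S.curvature X Y Z) W

lemma curvature_antisymm (X Y Z : V) : S.curvature X Y Z = -S.curvature Y X Z := by
  simp only [curvature, S.bk_eq, S.sub_lc]
  abel

lemma curvatureForm_antisymm_left (X Y Z W : V) :
    S.curvatureForm X Y Z W = -S.curvatureForm Y X Z W := by
  rw [curvatureForm, S.curvature_antisymm, S.g_neg_left, curvatureForm]

lemma act_act_g (X Y Z W : V) :
    S.act X (S.act Y (S.g Z W)) = S.g (S.lc X (S.lc Y Z)) W + S.g (S.lc Y Z) (S.lc X W)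
      + S.g (S.lc X Z) (S.lc Y W) + S.g Z (S.lc X (S.lc Y W)) := by
  rw [S.act_g Y, S.act_add, S.act_g, S.act_g]
  ring

lemma curvatureForm_antisymm_right (X Y Z W : V) :
    S.curvatureForm X Y Z W = -S.curvatureForm X Y W Z := by
  have h := S.act_bk X Y (S.g Z W)
  rw [S.act_g, S.act_act_g, S.act_act_g] at h
  simp only [curvatureForm, curvature, S.g_sub_left]
  rw [S.g_comm (S.lc X (S.lc Y W)), S.g_comm (S.lc Y (S.lc X W)), S.g_comm (S.lc (S.bk X Y) W)]
  linear_combination -h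

lemma curvature_cyclic (X Y Z : V) :
    S.curvature X Y Z + S.curvature Y Z X + S.curvature Z X Y = 0 := by
  have h := S.jacobi X Y Z
  simp only [S.bk_eq, S.sub_lc, S.lc_sub] at h
  simp only [curvature, S.bk_eq, S.sub_lc]
  rw [← neg_eq_zero]
  abel_nf at h ⊢
  exact h

lemma curvatureForm_cyclic (X Y Z W : V) :
    S.curvatureForm X Y Z W + S.curvatureForm Y Z X W + S.curvatureForm Z X Y W = 0 := by
  simp only [curvatureForm, ← S.g_add_left, S.curvature_cyclic, S.g_zero_left]

lemma curvatureForm_pair_comm (X Y Z W : V) :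
    S.curvatureForm X Y Z W = S.curvatureForm Z W X Y := by
  have c₁ := S.curvatureForm_cyclic Y Z X W
  have c₂ := S.curvatureForm_cyclic Z X W Y
  have c₃ := S.curvatureForm_cyclic X W Y Z
  have c₄ := S.curvatureForm_cyclic W Y Z X
  have s₁ := S.curvatureForm_antisymm_right Y Z X W
  have s₂ := S.curvatureForm_antisymm_right Z X Y W
  have s₃ := S.curvatureForm_antisymm_right X W Z Y
  have s₄ := S.curvatureForm_antisymm_right W Y X Z
  have t₁ := S.curvatureForm_antisymm_left Y X W Z
  have t₂ := S.curvatureForm_antisymm_right X Y W Z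
  have t₃ := S.curvatureForm_antisymm_left W Z X Y
  have t₄ := S.curvatureForm_antisymm_right Z W Y X
  refine sub_eq_zero.mp (eq_zero_of_eq_neg ?_)
  linear_combination c₁ + c₂ + c₃ + c₄ - s₁ - s₂ - s₃ - s₄ - t₁ + t₂ - t₃ - t₄

def covDeriv₁ (β : Module.Dual C V) : LinearMap.BilinForm C V :=
  LinearMap.mk₂ C (fun X Y => S.act X (β Y) - β (S.lc X Y))
    (fun X X' Y => by simp only [S.add_act, S.add_lc, map_add]; ring)
    (fun f X Y => by simp only [S.smul_act, S.smul_lc, map_smul, smul_eq_mul]; ring)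
    (fun X Y Y' => by simp only [map_add, S.act_add, S.lc_add]; ring)
    (fun f X Y => by simp only [map_smul, smul_eq_mul, S.act_mul, S.lc_smul, map_add]; ring)

lemma covDeriv₁_apply (β : Module.Dual C V) (X Y : V) :
    S.covDeriv₁ β X Y = S.act X (β Y) - β (S.lc X Y) := rfl

lemma covDeriv₁_algebraMap_smul (r : ℝ) (β : Module.Dual C V) (X Y : V) :
    S.covDeriv₁ (algebraMap ℝ C r • β) X Y = algebraMap ℝ C r * S.covDeriv₁ β X Y := by
  simp only [covDeriv₁_apply, LinearMap.smul_apply, smul_eq_mul, S.act_algebraMap_mul]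
  ring

def extDeriv (β : Module.Dual C V) (X Y : V) : C := S.act X (β Y) - S.act Y (β X) - β (S.bk X Y)

lemma extDeriv_eq_covDeriv₁_sub (β : Module.Dual C V) (X Y : V) :
    S.extDeriv β X Y = S.covDeriv₁ β X Y - S.covDeriv₁ β Y X := by
  simp only [extDeriv, covDeriv₁_apply, S.bk_eq, map_sub]
  ring

variable (α : LinearMap.BilinForm C V)

def covDeriv₂ : V →ₗ[C] LinearMap.BilinForm C V where
  toFun X := LinearMap.mk₂ C (fun Y Z => S.act X (α Y Z) - α (S.lc X Y) Z - α Y (S.lc X Z))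
    (fun Y Y' Z => by simp only [map_add, LinearMap.add_apply, S.act_add, S.lc_add]; ring)
    (fun f Y Z => by
      simp only [map_smul, LinearMap.smul_apply, smul_eq_mul, S.act_mul, S.lc_smul, map_add,
        LinearMap.add_apply]
      ring)
    (fun Y Z Z' => by simp only [map_add, S.act_add, S.lc_add]; ring)
    (fun f Y Z => by
      simp only [map_smul, smul_eq_mul, S.act_mul, S.lc_smul, map_add]
      ring)
  map_add' X X' := by
    ext Y Z
    simp only [LinearMap.mk₂_apply, LinearMap.add_apply, S.add_act, S.add_lc, map_add]
    ring
  map_smul' f X := by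
    ext Y Z
    simp only [LinearMap.mk₂_apply, LinearMap.smul_apply, smul_eq_mul, S.smul_act, S.smul_lc,
      map_smul, RingHom.id_apply]
    ring

lemma covDeriv₂_apply (X Y Z : V) :
    S.covDeriv₂ α X Y Z = S.act X (α Y Z) - α (S.lc X Y) Z - α Y (S.lc X Z) := rfl

lemma covDeriv₂_antisymm (hα : α.IsAlt) (X Y Z : V) :
    S.covDeriv₂ α X Y Z = -S.covDeriv₂ α X Z Y := by
  simp only [covDeriv₂_apply, ← hα.neg_eq Z Y, ← hα.neg_eq Z (S.lc X Y), ← hα.neg_eq (S.lc X Z) Y,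
    S.act_neg]
  ring

def secondCovDeriv₂ (X Y Z W : V) : C :=
  S.act X (S.covDeriv₂ α Y Z W) - S.covDeriv₂ α (S.lc X Y) Z W - S.covDeriv₂ α Y (S.lc X Z) W
    - S.covDeriv₂ α Y Z (S.lc X W)

lemma secondCovDeriv₂_antisymm (hα : α.IsAlt) (X Y Z W : V) :
    S.secondCovDeriv₂ α X Y Z W = -S.secondCovDeriv₂ α X Y W Z := by
  simp only [secondCovDeriv₂, S.covDeriv₂_antisymm α hα _ Z, S.covDeriv₂_antisymm α hα _ (S.lc X Z),
    S.act_neg]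
  ring

theorem secondCovDeriv₂_sub_swap (X Y Z W : V) :
    S.secondCovDeriv₂ α X Y Z W - S.secondCovDeriv₂ α Y X Z W
      = -α (S.curvature X Y Z) W - α Z (S.curvature X Y W) := by
  have h := S.act_comm X Y (α Z W)
  simp only [secondCovDeriv₂, covDeriv₂_apply, curvature, S.bk_eq, S.sub_lc, S.act_sub, map_sub,
    LinearMap.sub_apply]
  linear_combination h

end LeviCivitaConnection

structure RiemannianFrame (ι C V : Type*) [Fintype ι] [DecidableEq ι] [CommRing C] [Algebra ℝ C]
    [AddCommGroup V] [Module C V] extends LeviCivitaConnection C V where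
  e : ι → V
  g_frame : ∀ i j, g (e i) (e j) = if i = j then 1 else 0
  eq_sum_frame : ∀ X, X = ∑ i, g X (e i) • e i

namespace RiemannianFrame

open LeviCivitaConnection

variable {ι C V : Type*} [Fintype ι] [DecidableEq ι] [CommRing C] [Algebra ℝ C] [AddCommGroup V]
  [Module C V]
variable (S : RiemannianFrame ι C V)

lemma act_g_frame (X : V) (i j : ι) : S.act X (S.g (S.e i) (S.e j)) = 0 := by
  rw [S.g_frame]
  split
  · exact S.act_one X
  · exact S.act_zero X

lemma apply_eq_sum_frame (F : Module.Dual C V) (X : V) :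
    F X = ∑ i, S.g X (S.e i) * F (S.e i) := by
  conv_lhs => rw [S.eq_sum_frame X]
  simp only [map_sum, map_smul, smul_eq_mul]

lemma apply_left_eq_sum_frame (B : LinearMap.BilinForm C V) (X Y : V) :
    B X Y = ∑ i, S.g X (S.e i) * B (S.e i) Y :=
  S.apply_eq_sum_frame (B.flip Y) X

lemma g_lc_frame_antisymm (X : V) (i j : ι) :
    S.g (S.lc X (S.e i)) (S.e j) = -S.g (S.lc X (S.e j)) (S.e i) := by
  have h := S.act_g X (S.e i) (S.e j)
  rw [S.act_g_frame, S.g_comm (S.e i)] at h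
  linear_combination -h

/-- The frame trace of a bilinear form is parallel. -/
lemma sum_apply_lc_frame_add (B : LinearMap.BilinForm C V) (X : V) :
    ∑ i, (B (S.lc X (S.e i)) (S.e i) + B (S.e i) (S.lc X (S.e i))) = 0 := by
  calc ∑ i, (B (S.lc X (S.e i)) (S.e i) + B (S.e i) (S.lc X (S.e i)))
      = ∑ i, ∑ m, S.g (S.lc X (S.e i)) (S.e m) * (B (S.e m) (S.e i) + B (S.e i) (S.e m)) := by
        refine sum_congr rfl fun i _ => ?_
        rw [S.apply_left_eq_sum_frame B, S.apply_eq_sum_frame (B (S.e i)), ← sum_add_distrib]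
        simp only [mul_add]
    _ = 0 := sum_sum_eq_zero_of_antisymm fun i m => by
        rw [S.g_lc_frame_antisymm X i m]
        ring

variable (α : LinearMap.BilinForm C V)

def codiff : Module.Dual C V := -∑ i, S.covDeriv₂ α (S.e i) (S.e i)

lemma codiff_apply (X : V) : S.codiff α X = -∑ i, S.covDeriv₂ α (S.e i) (S.e i) X := by
  simp only [codiff, LinearMap.neg_apply, LinearMap.sum_apply]

def codiff₁ (β : Module.Dual C V) : C := -∑ i, S.covDeriv₁ β (S.e i) (S.e i)

lemma covDeriv₁_codiff (X Z : V) :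
    S.covDeriv₁ (S.codiff α) X Z = -∑ i, S.secondCovDeriv₂ α X (S.e i) (S.e i) Z := by
  have h := S.sum_apply_lc_frame_add ((S.covDeriv₂ α).compr₂ (LinearMap.applyₗ Z)) X
  simp only [LinearMap.compr₂_apply, LinearMap.applyₗ_apply_apply, sum_add_distrib] at h
  simp only [covDeriv₁_apply, codiff_apply, S.act_neg, S.act_sum, secondCovDeriv₂,
    sum_sub_distrib]
  linear_combination -h

def ricciForm (X Y : V) : C := ∑ i, S.curvatureForm X (S.e i) (S.e i) Y

lemma ricciForm_comm (X Y : V) : S.ricciForm X Y = S.ricciForm Y X :=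
  sum_congr rfl fun i _ => by
    rw [S.curvatureForm_pair_comm X, S.curvatureForm_antisymm_left (S.e i),
      S.curvatureForm_antisymm_right Y (S.e i) X, neg_neg]

lemma apply_curvature_eq_sum (X Y Z W : V) :
    α (S.curvature X Y Z) W = ∑ m, S.curvatureForm X Y Z (S.e m) * α (S.e m) W :=
  S.apply_left_eq_sum_frame α _ W

lemma sum_sum_ricciForm_mul (hα : α.IsAlt) :
    ∑ i, ∑ j, S.ricciForm (S.e i) (S.e j) * α (S.e j) (S.e i) = 0 :=
  sum_sum_eq_zero_of_antisymm fun i j => by rw [S.ricciForm_comm, ← hα.neg_eq]; ring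

lemma sum_sum_apply_curvature_left (hα : α.IsAlt) :
    ∑ j, ∑ i, α (S.curvature (S.e j) (S.e i) (S.e i)) (S.e j) = 0 := by
  simp only [S.apply_curvature_eq_sum]
  rw [← S.sum_sum_ricciForm_mul α hα]
  refine sum_congr rfl fun j _ => ?_
  rw [sum_comm]
  simp only [ricciForm, sum_mul]

lemma sum_sum_apply_curvature_right (hα : α.IsAlt) :
    ∑ j, ∑ i, α (S.e i) (S.curvature (S.e j) (S.e i) (S.e j)) = 0 := by
  have h (i j : ι) : α (S.e i) (S.curvature (S.e j) (S.e i) (S.e j))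
      = ∑ m, S.curvatureForm (S.e i) (S.e j) (S.e j) (S.e m) * α (S.e m) (S.e i) := by
    rw [← hα.neg_eq, S.apply_curvature_eq_sum, ← sum_neg_distrib]
    refine sum_congr rfl fun m _ => ?_
    rw [S.curvatureForm_antisymm_left (S.e j)]
    ring
  simp only [h]
  rw [sum_comm, ← S.sum_sum_ricciForm_mul α hα]
  refine sum_congr rfl fun i _ => ?_
  rw [sum_comm]
  simp only [ricciForm, sum_mul]

theorem sum_sum_secondCovDeriv₂ (hα : α.IsAlt) :
    ∑ j, ∑ i, S.secondCovDeriv₂ α (S.e j) (S.e i) (S.e i) (S.e j) = 0 := by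
  have ricci : ∑ j, ∑ i, (S.secondCovDeriv₂ α (S.e j) (S.e i) (S.e i) (S.e j)
      - S.secondCovDeriv₂ α (S.e i) (S.e j) (S.e i) (S.e j)) = 0 := by
    simp only [S.secondCovDeriv₂_sub_swap, sub_eq_add_neg, sum_add_distrib, sum_neg_distrib,
      S.sum_sum_apply_curvature_left α hα, S.sum_sum_apply_curvature_right α hα, neg_zero,
      add_zero]
  have swap : ∑ j, ∑ i, S.secondCovDeriv₂ α (S.e i) (S.e j) (S.e i) (S.e j)
      = -∑ j, ∑ i, S.secondCovDeriv₂ α (S.e j) (S.e i) (S.e i) (S.e j) := by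
    rw [sum_comm, ← sum_neg_distrib]
    exact sum_congr rfl fun j _ => by
      rw [← sum_neg_distrib]
      exact sum_congr rfl fun i _ => S.secondCovDeriv₂_antisymm α hα _ _ _ _
  -- By the Ricci identity the double sum equals its transpose, which is minus itself.
  refine eq_zero_of_eq_neg ?_
  rw [← swap]
  simpa only [sum_sub_distrib, sub_eq_zero] using ricci

theorem codiff₁_codiff (hα : α.IsAlt) : S.codiff₁ (S.codiff α) = 0 := by
  simp only [codiff₁, S.covDeriv₁_codiff, sum_neg_distrib, neg_neg, S.sum_sum_secondCovDeriv₂ α hα]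

end RiemannianFrame

structure AlmostHermitianFrame (ι C V : Type*) [Fintype ι] [DecidableEq ι] [CommRing C]
    [Algebra ℝ C] [AddCommGroup V] [Module C V] extends RiemannianFrame ι C V where
  J : V → V
  J_add : ∀ X Y, J (X + Y) = J X + J Y
  J_smul : ∀ (f : C) X, J (f • X) = f • J X
  J_J : ∀ X, J (J X) = -X
  g_J_J : ∀ X Y, g (J X) (J Y) = g X Y

namespace AlmostHermitianFrame

open LeviCivitaConnection RiemannianFrame

variable {ι C V : Type*} [Fintype ι] [DecidableEq ι] [CommRing C] [Algebra ℝ C] [AddCommGroup V]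
  [Module C V]
variable (S : AlmostHermitianFrame ι C V)

def Jₗ : V →ₗ[C] V where
  toFun := S.J
  map_add' := S.J_add
  map_smul' := S.J_smul

lemma Jₗ_apply (X : V) : S.Jₗ X = S.J X := rfl

lemma g_J_left (X Y : V) : S.g (S.J X) Y = -S.g X (S.J Y) := by
  have h := S.g_J_J X (S.J Y)
  rw [S.J_J, S.g_comm, S.g_neg_left, S.g_comm] at h
  rw [← h, neg_neg]

def kahler : LinearMap.BilinForm C V := S.gForm.compl₂ S.Jₗ

lemma kahler_apply (X Y : V) : S.kahler X Y = S.g X (S.J Y) := rfl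

lemma kahler_isAlt : S.kahler.IsAlt := fun X =>
  eq_zero_of_eq_neg (by rw [kahler_apply, ← S.g_J_left, S.g_comm])

lemma sum_J_frame_apply (B : LinearMap.BilinForm C V) :
    ∑ j, B (S.J (S.e j)) (S.e j) = -∑ j, B (S.e j) (S.J (S.e j)) := by
  calc ∑ j, B (S.J (S.e j)) (S.e j)
      = ∑ j, ∑ k, S.g (S.J (S.e j)) (S.e k) * B (S.e k) (S.e j) :=
        sum_congr rfl fun j _ => S.apply_left_eq_sum_frame B _ _
    _ = ∑ k, -∑ j, S.g (S.J (S.e k)) (S.e j) * B (S.e k) (S.e j) := by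
        rw [sum_comm]
        refine sum_congr rfl fun k _ => ?_
        rw [← sum_neg_distrib]
        refine sum_congr rfl fun j _ => ?_
        rw [S.g_J_left, S.g_comm, neg_mul]
    _ = -∑ j, B (S.e j) (S.J (S.e j)) := by
        rw [← sum_neg_distrib]
        exact sum_congr rfl fun k _ => by rw [S.apply_eq_sum_frame (B (S.e k)) (S.J (S.e k))]

lemma sum_apply_J_frame_mul_apply (β : Module.Dual C V) :
    ∑ i, β (S.J (S.e i)) * β (S.e i) = 0 := by
  have h := S.sum_J_frame_apply ((LinearMap.mul C C).compl₁₂ β β)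
  simp only [LinearMap.compl₁₂_apply, LinearMap.mul_apply'] at h
  refine eq_zero_of_eq_neg (h.trans ?_)
  simp only [mul_comm]

lemma sum_sum_mul_kahler (B : LinearMap.BilinForm C V) :
    ∑ i, ∑ j, B (S.e i) (S.e j) * S.kahler (S.e i) (S.e j) = ∑ j, B (S.J (S.e j)) (S.e j) := by
  rw [sum_comm]
  refine sum_congr rfl fun j _ => ?_
  rw [S.apply_left_eq_sum_frame B]
  refine sum_congr rfl fun i _ => ?_
  rw [kahler_apply, S.g_comm, mul_comm]

lemma sum_extDeriv_mul_kahler (β : Module.Dual C V) :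
    ∑ i, ∑ j, S.extDeriv β (S.e i) (S.e j) * S.kahler (S.e i) (S.e j)
      = -2 * ∑ j, S.covDeriv₁ β (S.e j) (S.J (S.e j)) := by
  have h := S.sum_sum_mul_kahler (S.covDeriv₁ β - (S.covDeriv₁ β).flip)
  simp only [LinearMap.sub_apply, LinearMap.BilinForm.flip_apply] at h
  simp only [S.extDeriv_eq_covDeriv₁_sub, h, sum_sub_distrib, S.sum_J_frame_apply]
  ring

lemma covDeriv₁_comp_J_apply_J (β : Module.Dual C V) (X : V) :
    S.covDeriv₁ (β ∘ₗ S.Jₗ) X (S.J X)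
      = -(S.covDeriv₁ β X X + β (S.J (S.lc X (S.J X)) + S.lc X X)) := by
  simp only [covDeriv₁_apply, LinearMap.comp_apply, Jₗ_apply, S.J_J, map_neg, S.act_neg, map_add]
  ring

lemma g_J_lc_J_add_lc (X Y : V) :
    S.g (S.J (S.lc X (S.J X)) + S.lc X X) Y = S.covDeriv₂ S.kahler X X (S.J Y) := by
  have h := S.act_g X (S.J X) (S.J Y)
  rw [S.g_J_J] at h
  have h₁ := S.g_J_left (S.lc X (S.J X)) Y
  have h₂ := S.g_J_left X (S.lc X (S.J Y))
  rw [covDeriv₂_apply, kahler_apply, kahler_apply, kahler_apply, S.J_J, S.g_add_left,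
    S.g_neg_right, S.g_neg_right, S.act_neg]
  linear_combination h₁ + h + h₂

lemma sum_codiff_kahler_J_lc_J_add_lc :
    ∑ j, S.codiff S.kahler (S.J (S.lc (S.e j) (S.J (S.e j))) + S.lc (S.e j) (S.e j)) = 0 := by
  calc ∑ j, S.codiff S.kahler (S.J (S.lc (S.e j) (S.J (S.e j))) + S.lc (S.e j) (S.e j))
      = ∑ i, (∑ j, S.covDeriv₂ S.kahler (S.e j) (S.e j) (S.J (S.e i)))
          * S.codiff S.kahler (S.e i) := by
        simp only [S.apply_eq_sum_frame (S.codiff S.kahler) (_ + _), S.g_J_lc_J_add_lc, sum_mul]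
        exact sum_comm
    _ = -∑ i, S.codiff S.kahler (S.J (S.e i)) * S.codiff S.kahler (S.e i) := by
        simp only [codiff_apply, neg_neg, neg_mul, sum_neg_distrib]
    _ = 0 := by rw [S.sum_apply_J_frame_mul_apply, neg_zero]

lemma sum_covDeriv₁_codiff_kahler_comp_J :
    ∑ j, S.covDeriv₁ (S.codiff S.kahler ∘ₗ S.Jₗ) (S.e j) (S.J (S.e j)) = 0 := by
  have h := S.codiff₁_codiff S.kahler S.kahler_isAlt
  rw [codiff₁, neg_eq_zero] at h
  simp only [S.covDeriv₁_comp_J_apply_J, sum_neg_distrib, sum_add_distrib, h,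
    S.sum_codiff_kahler_J_lc_J_add_lc, add_zero, neg_zero]

/-- With the convention `(Jα)(X) = -α(JX)`, the Lee form `-(1/(n-1)) J d*ω` is
`leeForm (1/(n-1))`. -/
def leeForm (c : ℝ) : Module.Dual C V := algebraMap ℝ C c • (S.codiff S.kahler ∘ₗ S.Jₗ)

lemma leeForm_apply (c : ℝ) (X : V) :
    S.leeForm c X = algebraMap ℝ C c * -∑ i, S.covDeriv₂ S.kahler (S.e i) (S.e i) (S.J X) := by
  rw [leeForm, LinearMap.smul_apply, LinearMap.comp_apply, Jₗ_apply, codiff_apply, smul_eq_mul]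

theorem sum_extDeriv_leeForm_mul_kahler (c : ℝ) :
    ∑ i, ∑ j, S.extDeriv (S.leeForm c) (S.e i) (S.e j) * S.kahler (S.e i) (S.e j) = 0 := by
  simp only [sum_extDeriv_mul_kahler, leeForm, covDeriv₁_algebraMap_smul, ← mul_sum,
    sum_covDeriv₁_codiff_kahler_comp_J, mul_zero]

end AlmostHermitianFrame

theorem stmt_0_general
    (n : ℕ)
    (C V : Type) [CommRing C] [Algebra ℝ C] [AddCommGroup V] [Module C V]
    (bk : V → V → V) (act : V → C → C) (g : V → V → C) (J : V → V)
    (e : Fin (2 * n) → V) (lc : V → V → V)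
    -- metric axioms
    (hg_symm : ∀ X Y, g X Y = g Y X)
    (hg_add : ∀ X Y Z, g (X + Y) Z = g X Z + g Y Z)
    (hg_smul : ∀ (f : C) (X Y), g (f • X) Y = f * g X Y)
    -- almost complex structure axioms
    (hJ_add : ∀ X Y, J (X + Y) = J X + J Y)
    (hJ_smul : ∀ (f : C) (X), J (f • X) = f • J X)
    (hJ_sq : ∀ X, J (J X) = -X)
    (hJ_iso : ∀ X Y, g (J X) (J Y) = g X Y)
    -- orthonormal local frame
    (h_orth : ∀ i j, g (e i) (e j) = if i = j then 1 else 0)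
    (h_span : ∀ X, X = ∑ i, g X (e i) • e i)
    -- derivation axioms for the action of vector fields on functions
    (hact_addf : ∀ X (f h : C), act X (f + h) = act X f + act X h)
    (hact_leib : ∀ X (f h : C), act X (f * h) = f * act X h + act X f * h)
    (hact_addX : ∀ X Y f, act (X + Y) f = act X f + act Y f)
    (hact_smulX : ∀ (f : C) X h, act (f • X) h = f * act X h)
    (hact_const : ∀ X (r : ℝ), act X (algebraMap ℝ C r) = 0)
    -- the bracket: torsion-freeness of `lc`, Jacobi identity, compatibility with `act`
    (h_tf : ∀ X Y, bk X Y = lc X Y - lc Y X)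
    (h_jacobi : ∀ X Y Z, bk (bk X Y) Z + bk (bk Y Z) X + bk (bk Z X) Y = 0)
    (h_actbk : ∀ X Y f, act (bk X Y) f = act X (act Y f) - act Y (act X f))
    -- Levi-Civita connection axioms
    (hlc_addl : ∀ X Y Z, lc (X + Y) Z = lc X Z + lc Y Z)
    (hlc_addr : ∀ X Y Z, lc X (Y + Z) = lc X Y + lc X Z)
    (hlc_smull : ∀ (f : C) X Y, lc (f • X) Y = f • lc X Y)
    (hlc_leib : ∀ (f : C) X Y, lc X (f • Y) = act X f • Y + f • lc X Y)
    (hlc_metric : ∀ X Y Z, act X (g Y Z) = g (lc X Y) Z + g Y (lc X Z)) :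
    -- the Kähler form ω = g(·, J·)
    let ω : V → V → C := fun X Y => g X (J Y)
    -- the covariant derivative (∇_X ω)(Y, Z)
    let covω : V → V → V → C := fun X Y Z => act X (ω Y Z) - ω (lc X Y) Z - ω Y (lc X Z)
    -- the coderivative d*ω(X) = -∑ᵢ (∇_{eᵢ} ω)(eᵢ, X)
    let codω : V → C := fun X => -∑ i, covω (e i) (e i) X
    -- the Lee form θ = -(1/(n-1)) J d*ω, i.e. θ(X) = (1/(n-1)) (d*ω)(J X)
    let θ : V → C := fun X => algebraMap ℝ C ((n : ℝ) - 1)⁻¹ * codω (J X)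
    -- the exterior derivative dθ(X, Y) = X θ(Y) - Y θ(X) - θ([X, Y])
    let dθ : V → V → C := fun X Y => act X (θ Y) - act Y (θ X) - θ (bk X Y)
    -- ⟨dθ, ω⟩ = 0 pointwise
    algebraMap ℝ C (1 / 2) * ∑ i, ∑ j, dθ (e i) (e j) * ω (e i) (e j) = 0 := by
  intro ω covω codω θ dθ
  let S : AlmostHermitianFrame (Fin (2 * n)) C V :=
    { bk, act, g, lc, e, J
      g_comm := hg_symm, g_add_left := hg_add, g_smul_left := hg_smul
      act_add := hact_addf, act_mul := hact_leib, add_act := hact_addX, smul_act := hact_smulX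
      act_algebraMap := hact_const, bk_eq := h_tf, jacobi := h_jacobi, act_bk := h_actbk
      add_lc := hlc_addl, lc_add := hlc_addr, smul_lc := hlc_smull, lc_smul := hlc_leib
      act_g := hlc_metric, g_frame := h_orth, eq_sum_frame := h_span
      J_add := hJ_add, J_smul := hJ_smul, J_J := hJ_sq, g_J_J := hJ_iso }
  have hθ (X : V) : θ X = S.leeForm ((n : ℝ) - 1)⁻¹ X := by
    rw [S.leeForm_apply]
    rfl
  have hdθ (X Y : V) : dθ X Y = S.extDeriv (S.leeForm ((n : ℝ) - 1)⁻¹) X Y := by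
    simp only [dθ, hθ]
    rfl
  have h : ∑ i, ∑ j, dθ (e i) (e j) * ω (e i) (e j) = 0 := by
    simp only [hdθ]
    exact S.sum_extDeriv_leeForm_mul_kahler _
  rw [h, mul_zero]

/-- On any almost Hermitian manifold of dimension `2n` with `n > 1`, the
component of `dθ` proportional to the Kähler form `ω` vanishes: `⟨dθ, ω⟩ = 0` pointwise.
The manifold is modelled formally through its ring of smooth functions `C`, its `C`-module of
vector fields `V`, the Lie bracket `bk`, the derivation action `act` of vector fields on
functions, the metric `g`, the almost complex structure `J` (with `J² = -1`, compatible with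
`g`), a local orthonormal frame `e`, and the Levi-Civita connection `lc`. -/
theorem stmt_0
    (n : ℕ) (hn : 1 < n)
    (C V : Type) [CommRing C] [Algebra ℝ C] [AddCommGroup V] [Module C V]
    (bk : V → V → V) (act : V → C → C) (g : V → V → C) (J : V → V)
    (e : Fin (2 * n) → V) (lc : V → V → V)
    -- metric axioms
    (hg_symm : ∀ X Y, g X Y = g Y X)
    (hg_add : ∀ X Y Z, g (X + Y) Z = g X Z + g Y Z)
    (hg_smul : ∀ (f : C) (X Y), g (f • X) Y = f * g X Y)
    -- almost complex structure axioms
    (hJ_add : ∀ X Y, J (X + Y) = J X + J Y)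
    (hJ_smul : ∀ (f : C) (X), J (f • X) = f • J X)
    (hJ_sq : ∀ X, J (J X) = -X)
    (hJ_iso : ∀ X Y, g (J X) (J Y) = g X Y)
    -- orthonormal local frame
    (h_orth : ∀ i j, g (e i) (e j) = if i = j then 1 else 0)
    (h_span : ∀ X, X = ∑ i, g X (e i) • e i)
    -- derivation axioms for the action of vector fields on functions
    (hact_addf : ∀ X (f h : C), act X (f + h) = act X f + act X h)
    (hact_leib : ∀ X (f h : C), act X (f * h) = f * act X h + act X f * h)
    (hact_addX : ∀ X Y f, act (X + Y) f = act X f + act Y f)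
    (hact_smulX : ∀ (f : C) X h, act (f • X) h = f * act X h)
    (hact_const : ∀ X (r : ℝ), act X (algebraMap ℝ C r) = 0)
    -- the bracket: torsion-freeness of `lc`, Jacobi identity, compatibility with `act`
    (h_tf : ∀ X Y, bk X Y = lc X Y - lc Y X)
    (h_jacobi : ∀ X Y Z, bk (bk X Y) Z + bk (bk Y Z) X + bk (bk Z X) Y = 0)
    (h_actbk : ∀ X Y f, act (bk X Y) f = act X (act Y f) - act Y (act X f))
    -- Levi-Civita connection axioms
    (hlc_addl : ∀ X Y Z, lc (X + Y) Z = lc X Z + lc Y Z)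
    (hlc_addr : ∀ X Y Z, lc X (Y + Z) = lc X Y + lc X Z)
    (hlc_smull : ∀ (f : C) X Y, lc (f • X) Y = f • lc X Y)
    (hlc_leib : ∀ (f : C) X Y, lc X (f • Y) = act X f • Y + f • lc X Y)
    (hlc_metric : ∀ X Y Z, act X (g Y Z) = g (lc X Y) Z + g Y (lc X Z)) :
    -- the Kähler form ω = g(·, J·)
    let ω : V → V → C := fun X Y => g X (J Y)
    -- the covariant derivative (∇_X ω)(Y, Z)
    let covω : V → V → V → C := fun X Y Z => act X (ω Y Z) - ω (lc X Y) Z - ω Y (lc X Z)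
    -- the coderivative d*ω(X) = -∑ᵢ (∇_{eᵢ} ω)(eᵢ, X)
    let codω : V → C := fun X => -∑ i, covω (e i) (e i) X
    -- the Lee form θ = -(1/(n-1)) J d*ω, i.e. θ(X) = (1/(n-1)) (d*ω)(J X)
    let θ : V → C := fun X => algebraMap ℝ C ((n : ℝ) - 1)⁻¹ * codω (J X)
    -- the exterior derivative dθ(X, Y) = X θ(Y) - Y θ(X) - θ([X, Y])
    let dθ : V → V → C := fun X Y => act X (θ Y) - act Y (θ X) - θ (bk X Y)
    -- ⟨dθ, ω⟩ = 0 pointwise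
    algebraMap ℝ C (1 / 2) * ∑ i, ∑ j, dθ (e i) (e j) * ω (e i) (e j) = 0 :=
  stmt_0_general n C V bk act g J e lc hg_symm hg_add hg_smul hJ_add hJ_smul hJ_sq hJ_iso h_orth
    h_span hact_addf hact_leib hact_addX hact_smulX hact_const h_tf h_jacobi h_actbk hlc_addl
    hlc_addr hlc_smull hlc_leib hlc_metric
end

section
/- Consider the 4-dimensional solvable Lie algebra with basis of one-forms e¹,...,e⁴ satisfying de¹ = e¹∧e⁴, de² = 0, de³ = e²∧e⁴ + e³∧e⁴, de⁴ = 0, with metric Σ eⁱ⊗eⁱ and Kähler form ω = e³∧e¹ + e⁴∧e². Then dω = (-e¹ - 2e⁴) ∧ ω, so the Lee form is θ = -e¹ - 2e⁴, and dθ = -e¹∧e⁴. -/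
private lemma key9 {A : Type*} [Ring A] [Module ℝ A] [SMulCommClass ℝ A A]
    [IsScalarTower ℝ A A]
    (a b c d : A) (haa : a * a = 0) (hdd : d * d = 0)
    (hab : a * b = -(b * a)) (hac : a * c = -(c * a)) (had : a * d = -(d * a))
    (hdb : d * b = -(b * d)) (hdc : d * c = -(c * d)) :
    (b * d + c * d) * a - c * (a * d) + ((0 : A) * b - d * (0 : A))
      = (-a - (2 : ℝ) • d) * (c * a + d * b) := by
  simp only [zero_mul, mul_zero, sub_zero, add_zero, add_mul, mul_add, neg_mul,
    smul_mul_assoc, sub_mul, neg_sub, had, hac, mul_neg, neg_neg, ← mul_assoc, haa, hdd,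
    zero_mul, mul_zero, neg_zero, zero_add, add_zero]
  have e1 : d * c * a = -(c * d * a) := by rw [hdc, neg_mul]
  have e2 : d * a * b = b * d * a := by
    rw [mul_assoc, hab, mul_neg, ← mul_assoc, hdb, neg_mul, neg_neg]
  have e3 : c * a * a = 0 := by rw [mul_assoc, haa, mul_zero]
  rw [e1, e2, e3]
  simp [two_smul, smul_neg]
  abel

/-- For the 4-dimensional solvable Lie algebra with structure equations
`de¹ = e¹∧e⁴`, `de² = 0`, `de³ = e²∧e⁴ + e³∧e⁴`, `de⁴ = 0` (the exterior derivative `d` on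
left-invariant forms being an `ℝ`-linear antiderivation), with Kähler form
`ω = e³∧e¹ + e⁴∧e²`, one has `dω = (-e¹ - 2e⁴) ∧ ω`; hence the Lee form is
`θ = -e¹ - 2e⁴` and `dθ = -e¹∧e⁴`.  (Indices are 0-based: `E 0 = e¹`, ..., `E 3 = e⁴`.) -/
theorem stmt_9
    (d : ExteriorAlgebra ℝ (Fin 4 → ℝ) →ₗ[ℝ] ExteriorAlgebra ℝ (Fin 4 → ℝ)) :
    let ι : (Fin 4 → ℝ) →ₗ[ℝ] ExteriorAlgebra ℝ (Fin 4 → ℝ) := ExteriorAlgebra.ι ℝ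
    let E : Fin 4 → ExteriorAlgebra ℝ (Fin 4 → ℝ) := fun i => ι (Pi.single i 1)
    -- d is an antiderivation with respect to 1-forms
    (∀ (v : Fin 4 → ℝ) (η), d (ι v * η) = d (ι v) * η - ι v * d η) →
    -- structure equations
    d (E 0) = E 0 * E 3 →
    d (E 1) = 0 →
    d (E 2) = E 1 * E 3 + E 2 * E 3 →
    d (E 3) = 0 →
    -- Kähler form and Lee form
    let ω := E 2 * E 0 + E 3 * E 1
    let θ := -E 0 - (2 : ℝ) • E 3
    d ω = θ * ω ∧ d θ = -(E 0 * E 3) := by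
  intro ι E hD h0 h1 h2 h3 ω θ
  have sq : ∀ i : Fin 4, E i * E i = 0 := fun i => ExteriorAlgebra.ι_sq_zero _
  have sw : ∀ i j : Fin 4, E i * E j = -(E j * E i) := fun i j =>
    eq_neg_of_add_eq_zero_left (ExteriorAlgebra.ι_add_mul_swap _ _)
  constructor
  · show d (E 2 * E 0 + E 3 * E 1) = (-E 0 - (2 : ℝ) • E 3) * (E 2 * E 0 + E 3 * E 1)
    rw [map_add, hD _ (E 0), hD _ (E 1), h0, h1, h2, h3]
    exact key9 (E 0) (E 1) (E 2) (E 3) (sq 0) (sq 3) (sw 0 1) (sw 0 2) (sw 0 3)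
      (sw 3 1) (sw 3 2)
  · show d (-E 0 - (2 : ℝ) • E 3) = -(E 0 * E 3)
    rw [map_sub, map_neg, map_smul, h0, h3, smul_zero, sub_zero]
end

section
/- The Inoue-type solvable Lie algebra with brackets [X₂,X₃] = -X₁, [X₄,X₂] = X₂, [X₄,X₃] = -X₃ (all others zero) carries an integrable almost complex structure J defined by JX₁ = X₂, JX₂ = -X₁, JX₃ = X₄ - qX₂, JX₄ = -X₃ - qX₁ for any real q; that is, the Nijenhuis tensor N(X,Y) = [X,Y] + J[JX,Y] + J[X,JY] - [JX,JY] vanishes. -/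
/-- The Inoue-type solvable Lie algebra with brackets `[X₂,X₃] = -X₁`,
`[X₄,X₂] = X₂`, `[X₄,X₃] = -X₃` (all others zero) carries an integrable almost complex
structure `J` with `JX₁ = X₂`, `JX₂ = -X₁`, `JX₃ = X₄ - qX₂`, `JX₄ = -X₃ - qX₁` for any
real `q`: the Nijenhuis tensor `N(X,Y) = [X,Y] + J[JX,Y] + J[X,JY] - [JX,JY]` vanishes.
(Indices are 0-based: `E 0 = X₁`, ..., `E 3 = X₄`.) -/
theorem stmt_11
    (q : ℝ)
    (br : (Fin 4 → ℝ) →ₗ[ℝ] (Fin 4 → ℝ) →ₗ[ℝ] (Fin 4 → ℝ))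
    (J : (Fin 4 → ℝ) →ₗ[ℝ] (Fin 4 → ℝ)) :
    let E : Fin 4 → (Fin 4 → ℝ) := fun i => Pi.single i 1
    -- the bracket is antisymmetric with the stated values
    (∀ X Y, br X Y = -br Y X) →
    br (E 1) (E 2) = -E 0 →
    br (E 3) (E 1) = E 1 →
    br (E 3) (E 2) = -E 2 →
    br (E 0) (E 1) = 0 →
    br (E 0) (E 2) = 0 →
    br (E 0) (E 3) = 0 →
    -- the almost complex structure
    J (E 0) = E 1 →
    J (E 1) = -E 0 →
    J (E 2) = E 3 - q • E 1 →
    J (E 3) = -E 2 - q • E 0 →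
    -- the Nijenhuis tensor vanishes
    ∀ X Y, br X Y + J (br (J X) Y) + J (br X (J Y)) - br (J X) (J Y) = 0 := by
  intro E hanti h12 h31 h32 h01 h02 h03 j0 j1 j2 j3
  -- derived bracket values
  have hself : ∀ X, br X X = 0 := by
    intro X
    have h := hanti X X
    have h2 : br X X + br X X = 0 := by
      nth_rewrite 2 [h]; abel
    have : (2 : ℝ) • br X X = 0 := by rw [two_smul]; exact h2
    simpa using this
  have h21 : br (E 2) (E 1) = E 0 := by rw [hanti, h12]; abel
  have h13 : br (E 1) (E 3) = -E 1 := by rw [hanti, h31]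
  have h23 : br (E 2) (E 3) = E 2 := by rw [hanti, h32]; abel
  have h10 : br (E 1) (E 0) = 0 := by rw [hanti, h01]; simp
  have h20 : br (E 2) (E 0) = 0 := by rw [hanti, h02]; simp
  have h30 : br (E 3) (E 0) = 0 := by rw [hanti, h03]; simp
  have h00 := hself (E 0)
  have h11 := hself (E 1)
  have h22 := hself (E 2)
  have h33 := hself (E 3)
  -- the Nijenhuis tensor as a bilinear map
  set N : (Fin 4 → ℝ) →ₗ[ℝ] (Fin 4 → ℝ) →ₗ[ℝ] (Fin 4 → ℝ) :=
    br + (br.comp J).compr₂ J + (br.compl₂ J).compr₂ J - (br.comp J).compl₂ J with hNdef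
  have hE : ∀ i : Fin 4, (Pi.basisFun ℝ (Fin 4)) i = E i := by
    intro i; simp [E, Pi.basisFun_apply]
  have hN : N = 0 := by
    apply (Pi.basisFun ℝ (Fin 4)).ext
    intro i
    apply (Pi.basisFun ℝ (Fin 4)).ext
    intro j
    rw [hE, hE]
    fin_cases i <;> fin_cases j <;>
      simp [hNdef, LinearMap.compr₂_apply, LinearMap.compl₂_apply, LinearMap.comp_apply,
        j0, j1, j2, j3, h12, h31, h32, h01, h02, h03, h21, h13, h23, h10, h20, h30,
        h00, h11, h22, h33, smul_sub, smul_neg] <;>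
      abel
  intro X Y
  have h := LinearMap.ext_iff.mp (LinearMap.ext_iff.mp hN X) Y
  simpa [hNdef, LinearMap.compr₂_apply, LinearMap.compl₂_apply, LinearMap.comp_apply,
    LinearMap.add_apply, LinearMap.sub_apply, sub_eq_iff_eq_add] using h
end

section
/- For the Lie algebra with structure equations de¹ = e²∧e³ + q e³∧e⁴, de² = e²∧e⁴, de³ = -e³∧e⁴, de⁴ = 0 (q ∈ ℝ), metric Σ eⁱ⊗eⁱ, and Kähler form ω = e²∧e¹ + e⁴∧e³, one has dω = (q e² - e⁴) ∧ ω; hence the Lee form is θ = q e² - e⁴ and dθ = q e²∧e⁴, with components (dθ)_{[λ₀^{1,1}]} = (q/2)(e¹∧e³ + e²∧e⁴) and (dθ)_{[[λ^{2,0}]]} = (q/2)(-e¹∧e³ + e²∧e⁴). -/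
/-- For the Inoue-type Lie algebra with structure equations
`de¹ = e²∧e³ + q e³∧e⁴`, `de² = e²∧e⁴`, `de³ = -e³∧e⁴`, `de⁴ = 0`, and Kähler form
`ω = e²∧e¹ + e⁴∧e³`, one has `dω = (q e² - e⁴) ∧ ω`; hence the Lee form is `θ = q e² - e⁴`
and `dθ = q e²∧e⁴`, with `U(2)`-components
`(dθ)_{[λ₀^{1,1}]} = (q/2)(e¹∧e³ + e²∧e⁴)` and
`(dθ)_{[[λ^{2,0}]]} = (q/2)(-e¹∧e³ + e²∧e⁴)`.
(Indices are 0-based: `E 0 = e¹`, ..., `E 3 = e⁴`.) -/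
theorem stmt_12
    (q : ℝ)
    (d : ExteriorAlgebra ℝ (Fin 4 → ℝ) →ₗ[ℝ] ExteriorAlgebra ℝ (Fin 4 → ℝ))
    (J : (Fin 4 → ℝ) →ₗ[ℝ] (Fin 4 → ℝ)) :
    let ι : (Fin 4 → ℝ) →ₗ[ℝ] ExteriorAlgebra ℝ (Fin 4 → ℝ) := ExteriorAlgebra.ι ℝ
    let E : Fin 4 → ExteriorAlgebra ℝ (Fin 4 → ℝ) := fun i => ι (Pi.single i 1)
    -- d is an antiderivation with respect to 1-forms
    (∀ (v : Fin 4 → ℝ) (η), d (ι v * η) = d (ι v) * η - ι v * d η) →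
    -- structure equations
    d (E 0) = E 1 * E 2 + q • (E 2 * E 3) →
    d (E 1) = E 1 * E 3 →
    d (E 2) = -(E 2 * E 3) →
    d (E 3) = 0 →
    -- Kähler form and Lee form as elements of the exterior algebra
    let ω := E 1 * E 0 + E 3 * E 2
    let θ := q • E 1 - E 3
    -- the bilinear realizations of ω and of dθ, and J determined by ω = ⟨·, J·⟩
    let dot : (Fin 4 → ℝ) → (Fin 4 → ℝ) → ℝ := fun X Y => ∑ i, X i * Y i
    let B : Fin 4 → (Fin 4 → ℝ) := fun i => Pi.single i 1
    let ωf : (Fin 4 → ℝ) → (Fin 4 → ℝ) → ℝ := fun X Y =>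
      (X 1 * Y 0 - X 0 * Y 1) + (X 3 * Y 2 - X 2 * Y 3)
    (∀ X Y, ωf X Y = dot X (J Y)) →
    let α : (Fin 4 → ℝ) → (Fin 4 → ℝ) → ℝ := fun X Y => q * (X 1 * Y 3 - X 3 * Y 1)
    let lam11 : (Fin 4 → ℝ) → (Fin 4 → ℝ) → ℝ := fun X Y =>
      (1 / 2) * (α X Y + α (J X) (J Y))
    let lam20 : (Fin 4 → ℝ) → (Fin 4 → ℝ) → ℝ := fun X Y =>
      (1 / 2) * (α X Y - α (J X) (J Y))
    let ip : ℝ := (1 / 2) * ∑ i, ∑ j, α (B i) (B j) * ωf (B i) (B j)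
    let rω : (Fin 4 → ℝ) → (Fin 4 → ℝ) → ℝ := fun X Y => (1 / 2) * ip * ωf X Y
    -- conclusions: dω = θ ∧ ω, dθ = q e²∧e⁴, and the stated U(2)-components of dθ
    d ω = θ * ω ∧
    d θ = q • (E 1 * E 3) ∧
    (∀ X Y, lam11 X Y - rω X Y
        = (q / 2) * ((X 0 * Y 2 - X 2 * Y 0) + (X 1 * Y 3 - X 3 * Y 1))) ∧
    (∀ X Y, lam20 X Y
        = (q / 2) * (-(X 0 * Y 2 - X 2 * Y 0) + (X 1 * Y 3 - X 3 * Y 1))) := by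
  intro ι E hanti h0 h1 h2 h3 ω θ dot B ωf hJ α lam11 lam20 ip rω
  have sq : ∀ i : Fin 4, E i * E i = 0 := fun i => ExteriorAlgebra.ι_sq_zero _
  have swap : ∀ i j : Fin 4, E i * E j = -(E j * E i) := fun i j => by
    have h : E i * E j + E j * E i = 0 :=
      ExteriorAlgebra.ι_add_mul_swap (Pi.single i 1 : Fin 4 → ℝ) (Pi.single j 1)
    exact eq_neg_of_add_eq_zero_left h
  have hJc : ∀ (Z : Fin 4 → ℝ) (i : Fin 4), J Z i = ωf (Pi.single i 1) Z := by
    intro Z i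
    have h := hJ (Pi.single i 1) Z
    rw [h]
    simp only [dot, Fin.sum_univ_four]
    fin_cases i <;> simp [Pi.single_apply]
  have j1 : ∀ Z : Fin 4 → ℝ, J Z 1 = Z 0 := by
    intro Z; rw [hJc Z 1]; simp only [ωf]; simp [Pi.single_apply]
  have j3 : ∀ Z : Fin 4 → ℝ, J Z 3 = Z 2 := by
    intro Z; rw [hJc Z 3]; simp only [ωf]; simp [Pi.single_apply]
  have hip : ip = 0 := by
    show (1 / 2) * ∑ i, ∑ j, α (B i) (B j) * ωf (B i) (B j) = 0
    simp [α, ωf, B, Fin.sum_univ_four, Pi.single_apply]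
  refine ⟨?_, ?_, ?_, ?_⟩
  · have hA : d (E 1 * E 0) = d (E 1) * E 0 - E 1 * d (E 0) := hanti _ _
    have hB : d (E 3 * E 2) = d (E 3) * E 2 - E 3 * d (E 2) := hanti _ _
    show d (E 1 * E 0 + E 3 * E 2) = (q • E 1 - E 3) * (E 1 * E 0 + E 3 * E 2)
    rw [map_add, hA, hB, h0, h1, h2, h3]
    rw [swap 1 3, swap 2 3]
    simp only [mul_add, mul_sub, sub_mul, add_mul, mul_neg, neg_mul, mul_smul_comm,
      smul_mul_assoc, zero_mul, mul_zero, ← mul_assoc, sq 1, sq 3, zero_mul, smul_neg,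
      neg_neg, smul_zero, mul_zero, zero_sub, neg_zero, zero_add, sub_zero]
    abel
  · show d (q • E 1 - E 3) = q • (E 1 * E 3)
    rw [map_sub, map_smul, h1, h3, sub_zero]
  · intro X Y
    show (1 / 2) * (α X Y + α (J X) (J Y)) - (1 / 2) * ip * ωf X Y = _
    rw [hip]
    show (1 / 2) * (q * (X 1 * Y 3 - X 3 * Y 1) +
        q * (J X 1 * J Y 3 - J X 3 * J Y 1)) - (1 / 2) * 0 * _ = _
    rw [j1, j3, j1, j3]; ring
  · intro X Y
    show (1 / 2) * (q * (X 1 * Y 3 - X 3 * Y 1) -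
        q * (J X 1 * J Y 3 - J X 3 * J Y 1)) = _
    rw [j1, j3, j1, j3]; ring
end

section
/- Consider the 6-dimensional nilpotent Lie algebra with deⁱ = 0 for 1 ≤ i ≤ 4, de⁵ = e¹∧e², de⁶ = e¹∧e⁴ + e²∧e³, metric Σ eⁱ⊗eⁱ, and Kähler form ω = e⁶∧e⁵ + (-(1/2)e³ + (√3/2)e⁴)∧e¹ + ((1/2)e⁴ + (√3/2)e³)∧e². Then dω = e¹∧e⁴∧e⁵ + e²∧e³∧e⁵ - e¹∧e²∧e⁶ and the Lee form θ = (1/2)⟨·⌟dω, ω⟩ equals -(√3/2)e⁵, so dθ = -(√3/2)e¹∧e². -/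
lemma ext_anticomm (v w : Fin 6 → ℝ) :
    ExteriorAlgebra.ι ℝ v * ExteriorAlgebra.ι ℝ w
      = -(ExteriorAlgebra.ι ℝ w * ExteriorAlgebra.ι ℝ v) := by
  have h := ExteriorAlgebra.ι_sq_zero (R := ℝ) (v + w)
  simp only [map_add, add_mul, mul_add, ExteriorAlgebra.ι_sq_zero, zero_add, add_zero] at h
  exact eq_neg_of_add_eq_zero_right h

set_option maxHeartbeats 1000000 in
/-- For the 6-dimensional nilpotent Lie algebra with `deⁱ = 0` for
`1 ≤ i ≤ 4`, `de⁵ = e¹∧e²`, `de⁶ = e¹∧e⁴ + e²∧e³`, and Kähler form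
`ω = e⁶∧e⁵ + (-(1/2)e³ + (√3/2)e⁴)∧e¹ + ((1/2)e⁴ + (√3/2)e³)∧e²`, one has
`dω = e¹∧e⁴∧e⁵ + e²∧e³∧e⁵ - e¹∧e²∧e⁶`, the Lee form `θ = (1/2)⟨·⌟dω, ω⟩` equals
`-(√3/2)e⁵`, and hence `dθ = -(√3/2)e¹∧e²`.
(Indices are 0-based: `E 0 = e¹`, ..., `E 5 = e⁶`.) -/
theorem stmt_14
    (d : ExteriorAlgebra ℝ (Fin 6 → ℝ) →ₗ[ℝ] ExteriorAlgebra ℝ (Fin 6 → ℝ)) :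
    let ι : (Fin 6 → ℝ) →ₗ[ℝ] ExteriorAlgebra ℝ (Fin 6 → ℝ) := ExteriorAlgebra.ι ℝ
    let E : Fin 6 → ExteriorAlgebra ℝ (Fin 6 → ℝ) := fun i => ι (Pi.single i 1)
    -- d is an antiderivation with respect to 1-forms
    (∀ (v : Fin 6 → ℝ) (η), d (ι v * η) = d (ι v) * η - ι v * d η) →
    -- structure equations
    d (E 0) = 0 → d (E 1) = 0 → d (E 2) = 0 → d (E 3) = 0 →
    d (E 4) = E 0 * E 1 →
    d (E 5) = E 0 * E 3 + E 1 * E 2 →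
    -- the Kähler form and the Lee form in the exterior algebra
    let ω := E 5 * E 4 + (-(1 / 2 : ℝ) • E 2 + (Real.sqrt 3 / 2) • E 3) * E 0
      + ((1 / 2 : ℝ) • E 3 + (Real.sqrt 3 / 2) • E 2) * E 1
    let θ := -(Real.sqrt 3 / 2) • E 4
    -- the bilinear/trilinear realizations of ω and dω used in the formula for θ
    let B : Fin 6 → (Fin 6 → ℝ) := fun i => Pi.single i 1
    let ωf : (Fin 6 → ℝ) → (Fin 6 → ℝ) → ℝ := fun X Y =>
      (X 5 * Y 4 - X 4 * Y 5)
        + ((-(1 / 2) * X 2 + (Real.sqrt 3 / 2) * X 3) * Y 0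
            - X 0 * (-(1 / 2) * Y 2 + (Real.sqrt 3 / 2) * Y 3))
        + (((1 / 2) * X 3 + (Real.sqrt 3 / 2) * X 2) * Y 1
            - X 1 * ((1 / 2) * Y 3 + (Real.sqrt 3 / 2) * Y 2))
    let w3 : Fin 6 → Fin 6 → Fin 6 → (Fin 6 → ℝ) → (Fin 6 → ℝ) → (Fin 6 → ℝ) → ℝ :=
      fun a b c X Y Z =>
        X a * (Y b * Z c - Y c * Z b) - X b * (Y a * Z c - Y c * Z a)
          + X c * (Y a * Z b - Y b * Z a)
    let dωf : (Fin 6 → ℝ) → (Fin 6 → ℝ) → (Fin 6 → ℝ) → ℝ := fun X Y Z =>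
      w3 0 3 4 X Y Z + w3 1 2 4 X Y Z - w3 0 1 5 X Y Z
    -- conclusions
    d ω = E 0 * E 3 * E 4 + E 1 * E 2 * E 4 - E 0 * E 1 * E 5 ∧
    (∀ X : Fin 6 → ℝ,
      (1 / 2) * ((1 / 2) * ∑ i, ∑ j, dωf X (B i) (B j) * ωf (B i) (B j))
        = -(Real.sqrt 3 / 2) * X 4) ∧
    d θ = -(Real.sqrt 3 / 2) • (E 0 * E 1) := by
  intro ι E hd h0 h1 h2 h3 h4 h5 ω θ B ωf w3 dωf
  have hac : ∀ i j : Fin 6, E i * E j = -(E j * E i) := fun i j =>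
    ext_anticomm _ _
  refine ⟨?_, ?_, ?_⟩
  · have e1 : d (E 5 * E 4) = (E 0 * E 3 + E 1 * E 2) * E 4 - E 5 * (E 0 * E 1) := by
      rw [hd, h5, h4]
    have e2 : d (E 2 * E 0) = 0 := by rw [hd, h2, h0]; simp
    have e3 : d (E 3 * E 0) = 0 := by rw [hd, h3, h0]; simp
    have e4 : d (E 3 * E 1) = 0 := by rw [hd, h3, h1]; simp
    have e5 : d (E 2 * E 1) = 0 := by rw [hd, h2, h1]; simp
    have expand : ω = E 5 * E 4 + ((-(1 / 2 : ℝ)) • (E 2 * E 0) + (Real.sqrt 3 / 2) • (E 3 * E 0))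
        + ((1 / 2 : ℝ) • (E 3 * E 1) + (Real.sqrt 3 / 2) • (E 2 * E 1)) := by
      simp only [ω, add_mul, smul_mul_assoc]
    rw [expand]
    simp only [map_add, map_smul, e1, e2, e3, e4, e5, smul_zero, add_zero]
    have comm : E 5 * (E 0 * E 1) = E 0 * E 1 * E 5 := by
      rw [← mul_assoc, hac 5 0, neg_mul, mul_assoc, hac 5 1, mul_neg, neg_neg, ← mul_assoc]
    rw [comm, add_mul]
  · intro X
    have hB : ∀ i j : Fin 6, B i j = if j = i then 1 else 0 := by
      intro i j; simp [B, Pi.single_apply]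
    simp only [dωf, ωf, w3, Fin.sum_univ_six, hB, Fin.reduceEq, reduceIte,
      mul_zero, zero_mul, mul_one, one_mul, sub_zero, zero_sub, add_zero, zero_add, neg_zero,
      mul_neg, neg_mul, neg_neg]
    ring
  · have : d θ = -(Real.sqrt 3 / 2) • d (E 4) := by
      simp only [θ, map_smul]
    rw [this, h4]
end

section
/- Let ξ₁ and ξ₂ be elements of T*⊗u(n)^⊥ with ξ₁ of type W₁ (totally skew with ⟨ξ₁_X Y, Z⟩ a 3-form of type (3,0)+(0,3)) and ξ₂ of type W₂. Then Σ_{i,j} ⟨ξ₁_{e_j} e_i, ξ₂_{e_j} J e_i⟩ = 0; i.e., since ξ₂ ∘ J (precomposition in the last slot with J) is again of type W₂, the W₁ and W₂ components are pointwise orthogonal under this pairing. -/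
/-!
Write `c₁(X, Y, Z) = ⟨ξ₁_X Y, Z⟩` and `c₂(X, Y, Z) = ⟨ξ₂_X JY, Z⟩`. Total skew-symmetry makes
`c₁` invariant under cyclic permutations, while `c₂` has vanishing cyclic sum: this is the
`W₂` condition for `ξ₂`, transported through `J` using `J ξ₂ = -ξ₂ J` and
`⟨ξ₂_{JX} JY, Z⟩ = -⟨ξ₂_X Y, Z⟩`. Averaging the pairing `∑ c₁ c₂` over the three cyclic
relabellings of the summation indices then gives `3 ∑ c₁ c₂ = 0`.
-/

section CyclicSums

variable {ι R : Type*} [Fintype ι]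

theorem Finset.sum_sum_sum_rotate [AddCommMonoid R] (f : ι → ι → ι → R) :
    ∑ i, ∑ j, ∑ k, f j k i = ∑ i, ∑ j, ∑ k, f i j k := by
  rw [Finset.sum_comm]
  exact Finset.sum_congr rfl fun _ _ => Finset.sum_comm

theorem sum_mul_eq_zero_of_cyclic [Field R] [CharZero R] (a b : ι → ι → ι → R)
    (ha : ∀ i j k, a i j k = a j k i) (hb : ∀ i j k, b i j k + b j k i + b k i j = 0) :
    ∑ i, ∑ j, ∑ k, a i j k * b i j k = 0 := by
  set S := ∑ i, ∑ j, ∑ k, a i j k * b i j k with hS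
  have hthree : 3 * S = ∑ i, ∑ j, ∑ k, a i j k * (b i j k + b j k i + b k i j) := by
    have h₁ : ∑ i, ∑ j, ∑ k, a i j k * b j k i = S := by
      rw [hS, ← Finset.sum_sum_sum_rotate fun i j k => a i j k * b i j k]
      exact Finset.sum_congr rfl fun i _ => Finset.sum_congr rfl fun j _ =>
        Finset.sum_congr rfl fun k _ => by rw [ha]
    have h₂ : ∑ i, ∑ j, ∑ k, a i j k * b k i j = S := by
      rw [← h₁, Finset.sum_sum_sum_rotate fun i j k => a k i j * b j k i]
      exact Finset.sum_congr rfl fun i _ => Finset.sum_congr rfl fun j _ =>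
        Finset.sum_congr rfl fun k _ => by rw [ha k i j]
    simp only [mul_add, Finset.sum_add_distrib, h₁, h₂]
    ring
  simp only [hb, mul_zero, Finset.sum_const_zero] at hthree
  exact (mul_eq_zero.mp hthree).resolve_left three_ne_zero

end CyclicSums

section ComplexStructure

variable {ι R : Type*} [Fintype ι]

theorem map_dotProduct_eq_neg_dotProduct_map [CommRing R] {J : (ι → R) →ₗ[R] (ι → R)}
    (hJJ : ∀ X, J (J X) = -X) (hJ : ∀ X Y, J X ⬝ᵥ J Y = X ⬝ᵥ Y) (X Y : ι → R) :
    J X ⬝ᵥ Y = -(X ⬝ᵥ J Y) := by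
  rw [← hJ X (J Y), hJJ, dotProduct_neg, neg_neg]

theorem apply_map_dotProduct_eq_of_anticommute [CommRing R] {J : (ι → R) →ₗ[R] (ι → R)}
    (hJ : ∀ X Y, J X ⬝ᵥ Y = -(X ⬝ᵥ J Y)) {f : (ι → R) → (ι → R)}
    (hf : ∀ Y, J (f Y) + f (J Y) = 0) (Y Z : ι → R) :
    f (J Y) ⬝ᵥ Z = f Y ⬝ᵥ J Z := by
  rw [eq_neg_of_add_eq_zero_right (hf Y), neg_dotProduct, hJ, neg_neg]

variable [Field R] [CharZero R] {J : (ι → R) →ₗ[R] (ι → R)}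
  {ξ : (ι → R) →ₗ[R] (ι → R) →ₗ[R] (ι → R)}

theorem apply₂_map_map_dotProduct_eq_neg (hJJ : ∀ X, J (J X) = -X)
    (hJ : ∀ X Y, J X ⬝ᵥ Y = -(X ⬝ᵥ J Y)) (hξJ : ∀ X Y, J (ξ X Y) + ξ X (J Y) = 0)
    (hcyc : ∀ X Y Z, ξ X Y ⬝ᵥ Z + ξ Y Z ⬝ᵥ X + ξ Z X ⬝ᵥ Y = 0) (X Y Z : ι → R) :
    ξ (J X) (J Y) ⬝ᵥ Z = -(ξ X Y ⬝ᵥ Z) := by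
  have hmove := fun X => apply_map_dotProduct_eq_of_anticommute hJ (hξJ X)
  -- the cyclic sum at `(JX, JY, Z)`, with both `J`s moved back into place
  have hrel : ∀ X Y Z, ξ (J X) (J Y) ⬝ᵥ Z + ξ (J Y) (J Z) ⬝ᵥ X = ξ Z X ⬝ᵥ Y := by
    intro X Y Z
    have h := hcyc (J X) (J Y) Z
    rw [← hmove, hmove Z X (J Y), hJJ, dotProduct_neg] at h
    linear_combination h
  linear_combination (hrel X Y Z + hrel Z X Y - hrel Y Z X + hcyc X Y Z) / 2

theorem apply₂_map_left_dotProduct_eq_map_right (hJJ : ∀ X, J (J X) = -X)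
    (hJ : ∀ X Y, J X ⬝ᵥ Y = -(X ⬝ᵥ J Y)) (hξJ : ∀ X Y, J (ξ X Y) + ξ X (J Y) = 0)
    (hcyc : ∀ X Y Z, ξ X Y ⬝ᵥ Z + ξ Y Z ⬝ᵥ X + ξ Z X ⬝ᵥ Y = 0) (X Y Z : ι → R) :
    ξ (J X) Y ⬝ᵥ Z = ξ X (J Y) ⬝ᵥ Z := by
  have h := apply₂_map_map_dotProduct_eq_neg hJJ hJ hξJ hcyc X (J Y) Z
  rw [hJJ, map_neg, neg_dotProduct] at h
  exact neg_inj.mp h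

theorem cyclic_sum_apply₂_comp_map_eq_zero (hJJ : ∀ X, J (J X) = -X)
    (hJ : ∀ X Y, J X ⬝ᵥ Y = -(X ⬝ᵥ J Y)) (hξJ : ∀ X Y, J (ξ X Y) + ξ X (J Y) = 0)
    (hcyc : ∀ X Y Z, ξ X Y ⬝ᵥ Z + ξ Y Z ⬝ᵥ X + ξ Z X ⬝ᵥ Y = 0) (X Y Z : ι → R) :
    ξ X (J Y) ⬝ᵥ Z + ξ Y (J Z) ⬝ᵥ X + ξ Z (J X) ⬝ᵥ Y = 0 := by
  have h := hcyc X Y (J Z)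
  rwa [← apply_map_dotProduct_eq_of_anticommute hJ (hξJ X),
    apply₂_map_left_dotProduct_eq_map_right hJJ hJ hξJ hcyc] at h

end ComplexStructure

theorem sum_dotProduct_eq_zero_of_cyclic {ι R : Type*} [Fintype ι] [DecidableEq ι] [Field R]
    [CharZero R] (ξ η : (ι → R) → (ι → R) → (ι → R))
    (hξ : ∀ X Y Z, ξ X Y ⬝ᵥ Z = ξ Y Z ⬝ᵥ X)
    (hη : ∀ X Y Z, η X Y ⬝ᵥ Z + η Y Z ⬝ᵥ X + η Z X ⬝ᵥ Y = 0) :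
    ∑ j, ∑ i, ξ (Pi.single j 1) (Pi.single i 1) ⬝ᵥ η (Pi.single j 1) (Pi.single i 1) = 0 := by
  have hcoord := fun (ζ : (ι → R) → (ι → R) → (ι → R)) i j k =>
    (dotProduct_single_one (ζ (Pi.single i 1) (Pi.single j 1)) k).symm
  refine sum_mul_eq_zero_of_cyclic _ _ (fun i j k => ?_) (fun i j k => ?_)
  · rw [hcoord ξ, hcoord ξ, hξ]
  · rw [hcoord η, hcoord η, hcoord η, hη]

theorem stmt_18_general
    (n : ℕ)
    (J : (Fin (2 * n) → ℝ) →ₗ[ℝ] (Fin (2 * n) → ℝ))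
    (ξ₁ ξ₂ : (Fin (2 * n) → ℝ) →ₗ[ℝ] (Fin (2 * n) → ℝ) →ₗ[ℝ] (Fin (2 * n) → ℝ)) :
    let V := Fin (2 * n) → ℝ
    let dot : V → V → ℝ := fun X Y => ∑ i, X i * Y i
    let E : Fin (2 * n) → V := fun i => Pi.single i 1
    -- J is a compatible complex structure
    (∀ X, J (J X) = -X) →
    (∀ X Y, dot (J X) (J Y) = dot X Y) →
    -- ξ₁, ξ₂ ∈ T* ⊗ u(n)^⊥
    (∀ X Y Z, dot (ξ₁ X Y) Z = -dot (ξ₁ X Z) Y) →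
    (∀ X Y, J (ξ₁ X Y) + ξ₁ X (J Y) = 0) →
    (∀ X Y Z, dot (ξ₂ X Y) Z = -dot (ξ₂ X Z) Y) →
    (∀ X Y, J (ξ₂ X Y) + ξ₂ X (J Y) = 0) →
    -- ξ₁ is of type W₁: ⟨ξ₁_X Y, Z⟩ is totally skew-symmetric
    (∀ X Y Z, dot (ξ₁ X Y) Z = -dot (ξ₁ Y X) Z) →
    -- ξ₂ is of type W₂: vanishing cyclic sum and vanishing trace
    (∀ X Y Z, dot (ξ₂ X Y) Z + dot (ξ₂ Y Z) X + dot (ξ₂ Z X) Y = 0) →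
    (∑ i, ξ₂ (E i) (E i) = 0) →
    -- the pairing of ξ₁ with ξ₂ ∘ J vanishes
    ∑ j, ∑ i, dot (ξ₁ (E j) (E i)) (ξ₂ (E j) (J (E i))) = 0 := by
  intro V dot E hJJ hJ hξ₁skew _ _ hξ₂J hξ₁W₁ hξ₂cyc _
  have hJskew := map_dotProduct_eq_neg_dotProduct_map hJJ hJ
  have hξ₁cyc : ∀ X Y Z : V, dot (ξ₁ X Y) Z = dot (ξ₁ Y Z) X := fun X Y Z => by
    rw [hξ₁W₁, hξ₁skew Y X Z, neg_neg]
  exact sum_dotProduct_eq_zero_of_cyclic (fun X Y => ξ₁ X Y) (fun X Y => ξ₂ X (J Y)) hξ₁cyc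
    (cyclic_sum_apply₂_comp_map_eq_zero hJJ hJskew hξ₂J hξ₂cyc)

/-- Let `ξ₁, ξ₂ ∈ T* ⊗ u(n)^⊥` (i.e. `⟨ξ_X Y, Z⟩ = -⟨ξ_X Z, Y⟩` and
`J ξ_X Y + ξ_X (JY) = 0`), with `ξ₁` of type `W₁` (totally skew) and `ξ₂` of type `W₂`
(vanishing cyclic sum and vanishing trace).  Then
`∑_{i,j} ⟨ξ₁_{e_j} e_i, ξ₂_{e_j} J e_i⟩ = 0`: since `ξ₂ ∘ J` is again of type `W₂`, the
`W₁`- and `W₂`-parts are pointwise orthogonal under this pairing.  (Dimension `2n`, `n ≥ 3`.) -/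
theorem stmt_18
    (n : ℕ) (hn : 3 ≤ n)
    (J : (Fin (2 * n) → ℝ) →ₗ[ℝ] (Fin (2 * n) → ℝ))
    (ξ₁ ξ₂ : (Fin (2 * n) → ℝ) →ₗ[ℝ] (Fin (2 * n) → ℝ) →ₗ[ℝ] (Fin (2 * n) → ℝ)) :
    let V := Fin (2 * n) → ℝ
    let dot : V → V → ℝ := fun X Y => ∑ i, X i * Y i
    let E : Fin (2 * n) → V := fun i => Pi.single i 1
    -- J is a compatible complex structure
    (∀ X, J (J X) = -X) →
    (∀ X Y, dot (J X) (J Y) = dot X Y) →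
    -- ξ₁, ξ₂ ∈ T* ⊗ u(n)^⊥
    (∀ X Y Z, dot (ξ₁ X Y) Z = -dot (ξ₁ X Z) Y) →
    (∀ X Y, J (ξ₁ X Y) + ξ₁ X (J Y) = 0) →
    (∀ X Y Z, dot (ξ₂ X Y) Z = -dot (ξ₂ X Z) Y) →
    (∀ X Y, J (ξ₂ X Y) + ξ₂ X (J Y) = 0) →
    -- ξ₁ is of type W₁: ⟨ξ₁_X Y, Z⟩ is totally skew-symmetric
    (∀ X Y Z, dot (ξ₁ X Y) Z = -dot (ξ₁ Y X) Z) →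
    -- ξ₂ is of type W₂: vanishing cyclic sum and vanishing trace
    (∀ X Y Z, dot (ξ₂ X Y) Z + dot (ξ₂ Y Z) X + dot (ξ₂ Z X) Y = 0) →
    (∑ i, ξ₂ (E i) (E i) = 0) →
    -- the pairing of ξ₁ with ξ₂ ∘ J vanishes
    ∑ j, ∑ i, dot (ξ₁ (E j) (E i)) (ξ₂ (E j) (J (E i))) = 0 :=
  stmt_18_general n J ξ₁ ξ₂
end
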